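/- arXiv:1909.02142 — 3 statements merged into one kernel-verified Lean document; each statement's English description precedes it below -/
import Mathlib

section
/- Let α ∈ (0,1), let ε : ℝ → ℝ be continuously differentiable on [0,∞), and let t > 0. Then the function u ↦ (1/Γ(1−α)) ∫₀ᵘ (u−s)^{−α} ε(s) ds is differentiable at t with derivative ε(0) t^{−α}/Γ(1−α) + (1/Γ(1−α)) ∫₀ᵗ (t−s)^{−α} ε′(s) ds. That is, the Riemann–Liouville fractional derivative of ε equals its Caputo fractional derivative plus the initial-condition term ε(0) t^{−α}/Γ(1−α), and the two derivatives coincide when ε(0) = 0. -/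
open MeasureTheory intervalIntegral Real Set Filter Topology

namespace RLCaputoAux

lemma ker_intInt {α : ℝ} (hα1 : (-1:ℝ) < -α) (u a b : ℝ) :
    IntervalIntegrable (fun s => (u - s) ^ (-α)) volume a b := by
  simpa using
    (intervalIntegral.intervalIntegrable_rpow' hα1 (a := u - a) (b := u - b)).comp_sub_left u

lemma ker_integral {α : ℝ} (hα1 : (-1:ℝ) < -α) (r u : ℝ) :
    ∫ s in r..u, (u - s) ^ (-α) = (u - r) ^ (1 - α) / (1 - α) := by
  rw [intervalIntegral.integral_comp_sub_left (fun x => x ^ (-α)) u]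
  rw [integral_rpow (Or.inl hα1)]
  rw [sub_self, Real.zero_rpow (by linarith), show (-α + 1 : ℝ) = 1 - α by ring]
  ring

lemma ker_integral' {α : ℝ} (hα1 : (-1:ℝ) < -α) (s u : ℝ) :
    ∫ v in s..u, (v - s) ^ (-α) = (u - s) ^ (1 - α) / (1 - α) := by
  rw [intervalIntegral.integral_comp_sub_right (fun x => x ^ (-α)) s]
  rw [integral_rpow (Or.inl hα1)]
  rw [sub_self, Real.zero_rpow (by linarith), show (-α + 1 : ℝ) = 1 - α by ring]
  ring

lemma byparts {α : ℝ} (hα0 : 0 < α) (hα1 : α < 1) {H ε : ℝ → ℝ} (HC : Continuous H)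
    (hεc : ContinuousOn ε (Ici 0)) (hεd : ∀ x : ℝ, 0 < x → HasDerivAt ε (H x) x)
    (u : ℝ) (hu : 0 < u) :
    ∫ s in (0:ℝ)..u, (u - s) ^ (-α) * ε s
      = ε 0 * (u ^ (1 - α) / (1 - α)) + ∫ s in (0:ℝ)..u, H s * ((u - s) ^ (1 - α) / (1 - α)) := by
  have hm1 : (-1:ℝ) < -α := by linarith
  have hc : (0:ℝ) < 1 - α := by linarith
  have huIcc : uIcc (0:ℝ) u = Icc 0 u := uIcc_of_le hu.le
  have kcont : ContinuousOn (fun s : ℝ => (u - s) ^ (1 - α)) (Icc 0 u) := by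
    apply ContinuousOn.rpow_const (by fun_prop)
    intro x hx
    exact Or.inr hc.le
  have int1 : IntervalIntegrable (fun s => H s * ((u - s) ^ (1 - α) / (1 - α))) volume 0 u := by
    apply ContinuousOn.intervalIntegrable
    rw [huIcc]
    exact (HC.continuousOn).mul (kcont.div_const _)
  have int2 : IntervalIntegrable (fun s => (ε s - ε 0) * (u - s) ^ (-α)) volume 0 u := by
    apply (ker_intInt hm1 u 0 u).continuousOn_mul
    rw [huIcc]
    exact (hεc.mono Icc_subset_Ici_self).sub continuousOn_const
  have int3 : IntervalIntegrable (fun s => (u - s) ^ (-α) * ε 0) volume 0 u :=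
    (ker_intInt hm1 u 0 u).mul_const _
  have key : (∫ s in (0:ℝ)..u,
      (H s * ((u - s) ^ (1 - α) / (1 - α)) - (ε s - ε 0) * (u - s) ^ (-α))) = 0 := by
    have hP : ∀ x ∈ Ioo (0:ℝ) u,
        HasDerivAt (fun s => (ε s - ε 0) * ((u - s) ^ (1 - α) / (1 - α)))
          (H x * ((u - x) ^ (1 - α) / (1 - α)) - (ε x - ε 0) * (u - x) ^ (-α)) x := by
      intro x hx
      have hbase : (0:ℝ) < u - x := by linarith [hx.2]
      have h1 : HasDerivAt (fun s : ℝ => u - s) (-1) x := by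
        simpa using (hasDerivAt_id x).const_sub u
      have h2 : HasDerivAt (fun y : ℝ => y ^ (1 - α)) ((1 - α) * (u - x) ^ (1 - α - 1)) (u - x) :=
        Real.hasDerivAt_rpow_const (Or.inl hbase.ne')
      have h3 : HasDerivAt (fun s : ℝ => (u - s) ^ (1 - α))
          ((1 - α) * (u - x) ^ (1 - α - 1) * (-1)) x := h2.comp x h1
      have h4 := ((hεd x hx.1).sub_const (ε 0)).mul (h3.div_const (1 - α))
      refine h4.congr_deriv ?_
      rw [show (1 - α - 1 : ℝ) = -α by ring]
      field_simp
      ring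
    have hPc : ContinuousOn (fun s => (ε s - ε 0) * ((u - s) ^ (1 - α) / (1 - α))) (Icc 0 u) :=
      ((hεc.mono Icc_subset_Ici_self).sub continuousOn_const).mul (kcont.div_const _)
    have := intervalIntegral.integral_eq_sub_of_hasDeriv_right_of_le hu.le hPc
      (fun x hx => (hP x hx).hasDerivWithinAt) (int1.sub int2)
    rw [this]
    rw [sub_self, Real.zero_rpow hc.ne', sub_self]
    simp
  have split : ∫ s in (0:ℝ)..u, (u - s) ^ (-α) * ε s
      = (∫ s in (0:ℝ)..u, (u - s) ^ (-α) * ε 0)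
        + ∫ s in (0:ℝ)..u, (ε s - ε 0) * (u - s) ^ (-α) := by
    rw [← intervalIntegral.integral_add int3 int2]
    apply intervalIntegral.integral_congr
    intro s hs
    ring
  rw [split]
  have e1 : (∫ s in (0:ℝ)..u, (u - s) ^ (-α) * ε 0) = ε 0 * (u ^ (1 - α) / (1 - α)) := by
    rw [intervalIntegral.integral_mul_const, ker_integral hm1, sub_zero]
    ring
  have e2 : (∫ s in (0:ℝ)..u, (ε s - ε 0) * (u - s) ^ (-α))
      = ∫ s in (0:ℝ)..u, H s * ((u - s) ^ (1 - α) / (1 - α)) := by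
    have := intervalIntegral.integral_sub int1 int2
    rw [key] at this
    linarith [this]
  rw [e1, e2]

lemma fubini_step {α : ℝ} (hα0 : 0 < α) (hα1 : α < 1) {H : ℝ → ℝ} (HC : Continuous H)
    (u : ℝ) (hu : 0 < u) :
    ∫ v in (0:ℝ)..u, (∫ s in (0:ℝ)..v, (v - s) ^ (-α) * H s)
      = ∫ s in (0:ℝ)..u, H s * ((u - s) ^ (1 - α) / (1 - α)) := by
  have hm1 : (-1:ℝ) < -α := by linarith
  have hc : (0:ℝ) < 1 - α := by linarith
  set μ := volume.restrict (Ioo (0:ℝ) u) with hμ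
  set Φ : ℝ × ℝ → ℝ := fun p => (p.1 - p.2) ^ (-α) * H p.2 with hΦ
  set S : Set (ℝ × ℝ) := {p | 0 < p.2 ∧ p.2 < p.1} with hS
  have hSm : MeasurableSet S := by
    apply MeasurableSet.inter
    · exact measurableSet_lt measurable_const measurable_snd
    · exact measurableSet_lt measurable_snd measurable_fst
  have hΦm : Measurable Φ := by
    apply Measurable.mul
    · exact (measurable_fst.sub measurable_snd).pow measurable_const
    · exact HC.measurable.comp measurable_snd
  set F : ℝ × ℝ → ℝ := S.indicator Φ with hF
  have hFm : AEStronglyMeasurable F (μ.prod μ) := (hΦm.indicator hSm).aestronglyMeasurable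
  obtain ⟨M, hM⟩ := isCompact_Icc.exists_bound_of_continuousOn (s := Icc (0:ℝ) u) HC.continuousOn
  have hM0 : 0 ≤ M := le_trans (norm_nonneg (H 0)) (hM 0 ⟨le_refl 0, hu.le⟩)
  have sect : ∀ v ∈ Ioo (0:ℝ) u, (fun s => F (v, s))
      = (Ioo 0 v).indicator (fun s => (v - s) ^ (-α) * H s) := by
    intro v hv
    funext s
    by_cases h : s ∈ Ioo (0:ℝ) v
    · rw [Set.indicator_of_mem h, hF, Set.indicator_of_mem]
      exact ⟨h.1, h.2⟩
    · rw [Set.indicator_of_notMem h, hF, Set.indicator_of_notMem]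
      intro hmem; exact h ⟨hmem.1, hmem.2⟩
  have sect_int : ∀ v : ℝ, 0 < v →
      IntegrableOn (fun s => (v - s) ^ (-α) * H s) (Ioo 0 v) volume := by
    intro v hv
    have h1 : IntervalIntegrable (fun s => (v - s) ^ (-α) * H s) volume 0 v :=
      (ker_intInt hm1 v 0 v).mul_continuousOn HC.continuousOn
    exact ((intervalIntegrable_iff_integrableOn_Ioc_of_le hv.le).1 h1).mono_set
      Ioo_subset_Ioc_self
  have ker_int_Ioo : ∀ v : ℝ, 0 < v →
      ∫ s in Ioo (0:ℝ) v, (v - s) ^ (-α) = v ^ (1 - α) / (1 - α) := by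
    intro v hv
    rw [← integral_Ioc_eq_integral_Ioo, ← intervalIntegral.integral_of_le hv.le,
      ker_integral hm1, sub_zero]
  have ker_intOn : ∀ v : ℝ, 0 < v → IntegrableOn (fun s => (v - s) ^ (-α)) (Ioo 0 v) volume := by
    intro v hv
    exact ((intervalIntegrable_iff_integrableOn_Ioc_of_le hv.le).1
      (ker_intInt hm1 v 0 v)).mono_set Ioo_subset_Ioc_self
  have hFint : Integrable F (μ.prod μ) := by
    refine (integrable_prod_iff hFm).2 ⟨?_, ?_⟩
    · filter_upwards [ae_restrict_mem measurableSet_Ioo] with v hv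
      rw [sect v hv, integrable_indicator_iff measurableSet_Ioo]
      rw [IntegrableOn, hμ, Measure.restrict_restrict measurableSet_Ioo,
        Set.inter_eq_self_of_subset_left (Ioo_subset_Ioo_right hv.2.le)]
      exact sect_int v hv.1
    · apply Integrable.mono' (integrable_const (M * (u ^ (1 - α) / (1 - α))))
        hFm.norm.integral_prod_right'
      filter_upwards [ae_restrict_mem measurableSet_Ioo] with v hv
      have hnorm : (fun s => ‖F (v, s)‖)
          = (Ioo 0 v).indicator (fun s => ‖(v - s) ^ (-α) * H s‖) := by
        funext s
        rw [show F (v, s) = ((Ioo 0 v).indicator (fun s => (v - s) ^ (-α) * H s)) s from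
          congrFun (sect v hv) s, norm_indicator_eq_indicator_norm]
      have e1 : ∫ s, ‖F (v, s)‖ ∂μ = ∫ s in Ioo (0:ℝ) v, ‖(v - s) ^ (-α) * H s‖ := by
        rw [hnorm, hμ, setIntegral_indicator measurableSet_Ioo,
          Set.inter_eq_self_of_subset_right (Ioo_subset_Ioo_right hv.2.le)]
      have e2 : ∫ s in Ioo (0:ℝ) v, ‖(v - s) ^ (-α) * H s‖
          ≤ ∫ s in Ioo (0:ℝ) v, (v - s) ^ (-α) * M := by
        apply setIntegral_mono_on ((sect_int v hv.1).norm)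
          ((ker_intOn v hv.1).mul_const M) measurableSet_Ioo
        intro s hs
        rw [norm_mul, Real.norm_eq_abs, Real.norm_eq_abs,
          abs_of_nonneg (Real.rpow_nonneg (by linarith [hs.2]) _)]
        apply mul_le_mul_of_nonneg_left _ (Real.rpow_nonneg (by linarith [hs.2]) _)
        exact (Real.norm_eq_abs (H s)) ▸ hM s ⟨hs.1.le, le_trans hs.2.le hv.2.le⟩
      have e3 : ∫ s in Ioo (0:ℝ) v, (v - s) ^ (-α) * M = (v ^ (1 - α) / (1 - α)) * M := by
        rw [MeasureTheory.integral_mul_const, ker_int_Ioo v hv.1]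
      rw [Real.norm_eq_abs, abs_of_nonneg (integral_nonneg fun s => norm_nonneg _)]
      calc ∫ s, ‖F (v, s)‖ ∂μ ≤ (v ^ (1 - α) / (1 - α)) * M := by rw [e1, ← e3]; exact e2
        _ ≤ M * (u ^ (1 - α) / (1 - α)) := by
            rw [mul_comm]
            apply mul_le_mul_of_nonneg_left _ hM0
            have hle : v ^ (1 - α) ≤ u ^ (1 - α) := Real.rpow_le_rpow hv.1.le hv.2.le hc.le
            apply div_le_div_of_nonneg_right hle hc.le
  -- now swap the order of integration
  have lhs_eq : ∫ v in (0:ℝ)..u, (∫ s in (0:ℝ)..v, (v - s) ^ (-α) * H s)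
      = ∫ v, (∫ s, F (v, s) ∂μ) ∂μ := by
    rw [intervalIntegral.integral_of_le hu.le, integral_Ioc_eq_integral_Ioo]
    apply setIntegral_congr_fun measurableSet_Ioo
    intro v hv
    show (∫ s in (0:ℝ)..v, (v - s) ^ (-α) * H s) = ∫ s, F (v, s) ∂μ
    rw [sect v hv, hμ, setIntegral_indicator measurableSet_Ioo,
      Set.inter_eq_self_of_subset_right (Ioo_subset_Ioo_right hv.2.le),
      ← integral_Ioc_eq_integral_Ioo, ← intervalIntegral.integral_of_le hv.1.le]
  have swap : ∫ v, (∫ s, F (v, s) ∂μ) ∂μ = ∫ s, (∫ v, F (v, s) ∂μ) ∂μ :=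
    integral_integral_swap hFint
  have rhs_eq : ∫ s, (∫ v, F (v, s) ∂μ) ∂μ
      = ∫ s in (0:ℝ)..u, H s * ((u - s) ^ (1 - α) / (1 - α)) := by
    rw [intervalIntegral.integral_of_le hu.le, integral_Ioc_eq_integral_Ioo]
    apply setIntegral_congr_fun measurableSet_Ioo
    intro s hs
    have vsect : (fun v => F (v, s)) = (Ioi s).indicator (fun v => (v - s) ^ (-α) * H s) := by
      funext v
      by_cases h : v ∈ Ioi s
      · rw [Set.indicator_of_mem h, hF, Set.indicator_of_mem]
        exact ⟨hs.1, h⟩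
      · rw [Set.indicator_of_notMem h, hF, Set.indicator_of_notMem]
        intro hmem; exact h hmem.2
    have hinter : Ioo (0:ℝ) u ∩ Ioi s = Ioo s u := by
      ext v
      constructor
      · rintro ⟨⟨_, h2⟩, h3⟩; exact ⟨h3, h2⟩
      · rintro ⟨h1, h2⟩; exact ⟨⟨lt_trans hs.1 h1, h2⟩, h1⟩
    show (∫ v, F (v, s) ∂μ) = H s * ((u - s) ^ (1 - α) / (1 - α))
    rw [vsect, hμ, setIntegral_indicator measurableSet_Ioi, hinter,
      ← integral_Ioc_eq_integral_Ioo, ← intervalIntegral.integral_of_le hs.2.le,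
      intervalIntegral.integral_mul_const, ker_integral' hm1, mul_comm]
  rw [lhs_eq, swap, rhs_eq]

lemma g_flip {α : ℝ} {H : ℝ → ℝ} (v : ℝ) :
    ∫ s in (0:ℝ)..v, (v - s) ^ (-α) * H s = ∫ x in (0:ℝ)..v, x ^ (-α) * H (v - x) := by
  have h := intervalIntegral.integral_comp_sub_left (a := 0) (b := v)
    (fun x => x ^ (-α) * H (v - x)) v
  simp only [sub_sub_cancel, sub_self, sub_zero] at h
  exact h

lemma g_contAt {α : ℝ} (hα0 : 0 < α) (hα1 : α < 1) {H : ℝ → ℝ} (HC : Continuous H)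
    (t : ℝ) (ht : 0 < t) :
    ContinuousAt (fun v => ∫ s in (0:ℝ)..v, (v - s) ^ (-α) * H s) t := by
  have hm1 : (-1:ℝ) < -α := by linarith
  set T := t + 1 with hT
  have htT : t < T := lt_add_one t
  set μ := volume.restrict (Ioc (0:ℝ) T) with hμ
  obtain ⟨M, hM⟩ := isCompact_Icc.exists_bound_of_continuousOn (s := Icc (0:ℝ) T) HC.continuousOn
  have hM0 : 0 ≤ M := le_trans (norm_nonneg (H 0)) (hM 0 ⟨le_refl 0, by linarith⟩)
  set Fm : ℝ → ℝ → ℝ := fun v σ => (Ioc 0 v).indicator (fun x => x ^ (-α) * H (v - x)) σ with hFm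
  have ev : ∀ v ∈ Ioo (0:ℝ) T, (∫ s in (0:ℝ)..v, (v - s) ^ (-α) * H s) = ∫ σ, Fm v σ ∂μ := by
    intro v hv
    rw [g_flip, intervalIntegral.integral_of_le hv.1.le, hμ, hFm]
    rw [setIntegral_indicator measurableSet_Ioc,
      Set.inter_eq_self_of_subset_right (Ioc_subset_Ioc_right hv.2.le)]
  have key : Tendsto (fun v => ∫ σ, Fm v σ ∂μ) (𝓝 t) (𝓝 (∫ σ, Fm t σ ∂μ)) := by
    apply MeasureTheory.tendsto_integral_filter_of_dominated_convergence (bound := fun σ => σ ^ (-α) * M)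
    · apply Eventually.of_forall
      intro v
      have hmeas : Measurable (fun x : ℝ => x ^ (-α) * H (v - x)) := by fun_prop
      exact (hmeas.indicator measurableSet_Ioc).aestronglyMeasurable
    · filter_upwards [Ioo_mem_nhds ht htT] with v hv
      filter_upwards [ae_restrict_mem measurableSet_Ioc] with σ hσ
      by_cases h : σ ∈ Ioc (0:ℝ) v
      · rw [hFm]
        simp only [Set.indicator_of_mem h]
        rw [norm_mul, Real.norm_eq_abs (σ ^ (-α)), abs_of_nonneg (Real.rpow_nonneg hσ.1.le _)]
        apply mul_le_mul_of_nonneg_left _ (Real.rpow_nonneg hσ.1.le _)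
        exact hM (v - σ) ⟨by linarith [h.2], by linarith [hv.2, hσ.1]⟩
      · rw [hFm]
        simp only [Set.indicator_of_notMem h, norm_zero]
        exact mul_nonneg (Real.rpow_nonneg hσ.1.le _) hM0
    · have hint : IntervalIntegrable (fun σ : ℝ => σ ^ (-α) * M) volume 0 T :=
        (intervalIntegral.intervalIntegrable_rpow' hm1).mul_const M
      exact (intervalIntegrable_iff_integrableOn_Ioc_of_le (by linarith)).1 hint
    · have hne : ∀ᵐ σ : ℝ, σ ≠ t := by
        rw [ae_iff]
        have : {σ : ℝ | ¬ σ ≠ t} = {t} := by ext σ; simp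
        rw [this]
        exact measure_singleton t
      filter_upwards [ae_restrict_mem measurableSet_Ioc, ae_restrict_of_ae hne] with σ hσ hσt
      rcases lt_or_gt_of_ne hσt with hlt | hgt
      · have hev : ∀ᶠ v in 𝓝 t, σ ^ (-α) * H (v - σ) = Fm v σ := by
          filter_upwards [eventually_gt_nhds hlt] with v hv
          exact (Set.indicator_of_mem (Set.mem_Ioc.2 ⟨hσ.1, hv.le⟩) (fun x => x ^ (-α) * H (v - x))).symm
        have hcont : Tendsto (fun v => σ ^ (-α) * H (v - σ)) (𝓝 t) (𝓝 (σ ^ (-α) * H (t - σ))) :=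
          ((continuous_const.mul (HC.comp (continuous_id.sub continuous_const))).tendsto t)
        have heq : Fm t σ = σ ^ (-α) * H (t - σ) :=
          Set.indicator_of_mem (Set.mem_Ioc.2 ⟨hσ.1, hlt.le⟩) (fun x => x ^ (-α) * H (t - x))
        rw [heq]
        exact Tendsto.congr' hev hcont
      · have hev : ∀ᶠ v in 𝓝 t, (0:ℝ) = Fm v σ := by
          filter_upwards [eventually_lt_nhds hgt] with v hv
          exact (Set.indicator_of_notMem (fun hmem => absurd hmem.2 (not_le.2 hv)) _).symm
        have heq : Fm t σ = 0 :=
          Set.indicator_of_notMem (fun hmem => absurd hmem.2 (not_le.2 hgt)) _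
        rw [heq]
        exact Tendsto.congr' hev tendsto_const_nhds
  have hfin : Tendsto (fun v => ∫ s in (0:ℝ)..v, (v - s) ^ (-α) * H s) (𝓝 t)
      (𝓝 (∫ σ, Fm t σ ∂μ)) := by
    apply key.congr'
    filter_upwards [Ioo_mem_nhds ht htT] with v hv
    exact (ev v hv).symm
  rw [ContinuousAt, ev t ⟨ht, htT⟩]
  exact hfin

end RLCaputoAux

open RLCaputoAux in
/-- For `α ∈ (0,1)` and `ε` continuously differentiable on `[0,∞)`, the
Riemann–Liouville fractional derivative of `ε` at `t > 0` equals the Caputo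
fractional derivative plus the initial-condition term `ε(0) t^{−α}/Γ(1−α)`. -/
theorem riemannLiouville_eq_caputo_add_initial
    (α : ℝ) (hα : α ∈ Set.Ioo (0 : ℝ) 1)
    (ε : ℝ → ℝ) (hε : ContDiffOn ℝ 1 ε (Set.Ici 0))
    (t : ℝ) (ht : 0 < t) :
    HasDerivAt
      (fun u : ℝ => (1 / Real.Gamma (1 - α)) * ∫ s in (0 : ℝ)..u, (u - s) ^ (-α) * ε s)
      (ε 0 * t ^ (-α) / Real.Gamma (1 - α)
        + (1 / Real.Gamma (1 - α)) * ∫ s in (0 : ℝ)..t, (t - s) ^ (-α) * deriv ε s)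
      t := by
  obtain ⟨hα0, hα1⟩ := hα
  have hm1 : (-1:ℝ) < -α := by linarith
  have hc : (0:ℝ) < 1 - α := by linarith
  set h : ℝ → ℝ := derivWithin ε (Set.Ici 0) with hh
  have hhc : ContinuousOn h (Set.Ici 0) :=
    hε.continuousOn_derivWithin (uniqueDiffOn_Ici 0) le_rfl
  set H : ℝ → ℝ := fun x => h (max x 0) with hH
  have HC : Continuous H :=
    hhc.comp_continuous (continuous_id.max continuous_const) fun x => le_max_right x 0
  have hεc : ContinuousOn ε (Set.Ici 0) := hε.continuousOn
  have hεd : ∀ x : ℝ, 0 < x → HasDerivAt ε (H x) x := by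
    intro x hx
    have hnhds : Set.Ici (0:ℝ) ∈ nhds x := Ici_mem_nhds hx
    have hd : DifferentiableWithinAt ℝ ε (Set.Ici 0) x :=
      (hε.differentiableOn one_ne_zero) x (le_of_lt hx)
    have h1 : HasDerivWithinAt ε (h x) (Set.Ici 0) x := hd.hasDerivWithinAt
    have h2 := h1.hasDerivAt hnhds
    simpa [hH, max_eq_left (le_of_lt hx)] using h2
  have hHd : ∀ x : ℝ, 0 < x → deriv ε x = H x := fun x hx => (hεd x hx).deriv
  set g : ℝ → ℝ := fun v => ∫ s in (0:ℝ)..v, (v - s) ^ (-α) * H s with hg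
  have gcont : ∀ v : ℝ, 0 < v → ContinuousAt g v := fun v hv => g_contAt hα0 hα1 HC v hv
  have gcontOn : ContinuousOn g (Set.Ioi 0) :=
    continuousOn_of_forall_continuousAt fun v hv => gcont v hv
  -- interval integrability of g on [0, t]
  obtain ⟨M, hM⟩ := isCompact_Icc.exists_bound_of_continuousOn (s := Icc (0:ℝ) t) HC.continuousOn
  have hM0 : 0 ≤ M := le_trans (norm_nonneg (H 0)) (hM 0 ⟨le_refl 0, ht.le⟩)
  have gint : IntervalIntegrable g volume 0 t := by
    rw [intervalIntegrable_iff_integrableOn_Ioc_of_le ht.le]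
    apply Integrable.mono' (integrable_const (t ^ (1 - α) / (1 - α) * M))
      ((gcontOn.mono Ioc_subset_Ioi_self).aestronglyMeasurable measurableSet_Ioc)
    filter_upwards [ae_restrict_mem measurableSet_Ioc] with v hv
    have hb : ∀ᵐ s ∂volume.restrict (Set.uIoc 0 v), ‖(v - s) ^ (-α) * H s‖ ≤ (v - s) ^ (-α) * M := by
      rw [uIoc_of_le hv.1.le]
      filter_upwards [ae_restrict_mem measurableSet_Ioc] with s hs
      rw [norm_mul, Real.norm_eq_abs ((v - s) ^ (-α)),
        abs_of_nonneg (Real.rpow_nonneg (by linarith [hs.2]) _)]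
      apply mul_le_mul_of_nonneg_left _ (Real.rpow_nonneg (by linarith [hs.2]) _)
      exact hM s ⟨hs.1.le, le_trans hs.2 hv.2⟩
    have h1 : ‖g v‖ ≤ |∫ s in (0:ℝ)..v, (v - s) ^ (-α) * M| :=
      intervalIntegral.norm_integral_le_abs_of_norm_le hb ((ker_intInt hm1 v 0 v).mul_const M)
    have h2 : (∫ s in (0:ℝ)..v, (v - s) ^ (-α) * M) = v ^ (1 - α) / (1 - α) * M := by
      rw [intervalIntegral.integral_mul_const, ker_integral hm1, sub_zero]
    rw [h2] at h1
    have h3 : |v ^ (1 - α) / (1 - α) * M| = v ^ (1 - α) / (1 - α) * M := by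
      apply abs_of_nonneg
      have := Real.rpow_nonneg hv.1.le (1 - α)
      positivity
    rw [h3] at h1
    apply le_trans h1
    apply mul_le_mul_of_nonneg_right _ hM0
    apply div_le_div_of_nonneg_right _ hc.le
    exact Real.rpow_le_rpow hv.1.le hv.2 hc.le
  have hg2 : HasDerivAt (fun u => ∫ v in (0:ℝ)..u, g v) (g t) t :=
    intervalIntegral.integral_hasDerivAt_right gint
      (gcontOn.stronglyMeasurableAtFilter isOpen_Ioi t ht) (gcont t ht)
  have hg1 : HasDerivAt (fun u : ℝ => ε 0 * (u ^ (1 - α) / (1 - α))) (ε 0 * t ^ (-α)) t := by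
    have h1 : HasDerivAt (fun u : ℝ => u ^ (1 - α)) ((1 - α) * t ^ (1 - α - 1)) t :=
      Real.hasDerivAt_rpow_const (Or.inl (ne_of_gt ht))
    have h2 := (h1.div_const (1 - α)).const_mul (ε 0)
    refine h2.congr_deriv ?_
    rw [show (1 - α - 1 : ℝ) = -α by ring]
    field_simp
  have hφ : HasDerivAt (fun u : ℝ => ε 0 * (u ^ (1 - α) / (1 - α)) + ∫ v in (0:ℝ)..u, g v)
      (ε 0 * t ^ (-α) + g t) t := hg1.add hg2
  have heq : ∀ u : ℝ, 0 < u →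
      (∫ s in (0:ℝ)..u, (u - s) ^ (-α) * ε s)
        = ε 0 * (u ^ (1 - α) / (1 - α)) + ∫ v in (0:ℝ)..u, g v := by
    intro u hu
    rw [byparts hα0 hα1 HC hεc hεd u hu, fubini_step hα0 hα1 HC u hu]
  have hF : HasDerivAt (fun u : ℝ => ∫ s in (0:ℝ)..u, (u - s) ^ (-α) * ε s)
      (ε 0 * t ^ (-α) + g t) t := by
    apply hφ.congr_of_eventuallyEq
    filter_upwards [Ioi_mem_nhds ht] with u hu
    exact heq u hu
  have hgt : g t = ∫ s in (0:ℝ)..t, (t - s) ^ (-α) * deriv ε s := by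
    show (∫ s in (0:ℝ)..t, (t - s) ^ (-α) * H s) = ∫ s in (0:ℝ)..t, (t - s) ^ (-α) * deriv ε s
    rw [intervalIntegral.integral_of_le ht.le, intervalIntegral.integral_of_le ht.le]
    apply setIntegral_congr_fun measurableSet_Ioc
    intro s hs
    show (t - s) ^ (-α) * H s = (t - s) ^ (-α) * deriv ε s
    rw [hHd s hs.1]
  rw [hgt] at hF
  have hfinal := hF.const_mul (1 / Real.Gamma (1 - α))
  refine hfinal.congr_deriv ?_
  ring
end

section
/- Let α ∈ (0,1), ω > 0, and t ∈ ℝ. Then the truncated integrals (1/Γ(1−α)) ∫_{t−R}^{t} (t−s)^{−α} · (iω e^{iωs}) ds converge, as R → ∞, to (iω)^α e^{iωt}, where (iω)^α denotes the principal complex power. That is, the Liouville–Weyl fractional derivative of order α of the harmonic function e^{iωt} equals (iω)^α e^{iωt}. -/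
open MeasureTheory intervalIntegral Filter Topology
open Set Real

lemma aux_integrableOn_rpow_exp {a r : ℝ} (ha : 0 < a) (ha1 : a ≤ 1) (hr : 0 < r) :
    IntegrableOn (fun t : ℝ => t ^ (a - 1) * Real.exp (-(r * t))) (Set.Ioi 0) := by
  have hm : Measurable (fun t : ℝ => t ^ (a - 1) * Real.exp (-(r * t))) := by fun_prop
  have h1 : IntegrableOn (fun t : ℝ => t ^ (a - 1) * Real.exp (-(r * t))) (Set.Ioc 0 1) := by
    have hbase : IntegrableOn (fun t : ℝ => t ^ (a - 1)) (Set.Ioc (0:ℝ) 1) := by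
      simpa using
        (((intervalIntegrable_iff_integrableOn_Ioc_of_le
          (zero_le_one : (0:ℝ) ≤ 1))).mp
          (intervalIntegral.intervalIntegrable_rpow' (by linarith)))
    refine hbase.mono' hm.aestronglyMeasurable.restrict ?_
    filter_upwards [ae_restrict_mem measurableSet_Ioc] with t ht
    have h0 : (0:ℝ) < t := ht.1
    have : Real.exp (-(r * t)) ≤ 1 := Real.exp_le_one_iff.mpr (by nlinarith)
    have hrp : (0:ℝ) ≤ t ^ (a - 1) := Real.rpow_nonneg h0.le _
    rw [Real.norm_eq_abs, abs_mul, abs_of_nonneg hrp, abs_of_nonneg (Real.exp_pos _).le]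
    nlinarith
  have h2 : IntegrableOn (fun t : ℝ => t ^ (a - 1) * Real.exp (-(r * t))) (Set.Ioi 1) := by
    have hbase : IntegrableOn (fun t : ℝ => Real.exp (-r * t)) (Set.Ioi (1:ℝ)) :=
      exp_neg_integrableOn_Ioi 1 hr
    refine hbase.mono' hm.aestronglyMeasurable.restrict ?_
    filter_upwards [ae_restrict_mem measurableSet_Ioi] with t ht
    have h1t : (1:ℝ) ≤ t := le_of_lt ht
    have hpow : t ^ (a - 1) ≤ 1 :=
      Real.rpow_le_one_of_one_le_of_nonpos h1t (by linarith)
    have hrp : (0:ℝ) ≤ t ^ (a - 1) := Real.rpow_nonneg (by linarith) _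
    rw [Real.norm_eq_abs, abs_mul, abs_of_nonneg hrp, abs_of_nonneg (Real.exp_pos _).le,
      neg_mul]
    nlinarith [Real.exp_pos (-(r*t))]
  have := h1.union h2
  rwa [Set.Ioc_union_Ioi_eq_Ioi (zero_le_one : (0:ℝ) ≤ 1)] at this

lemma aux_betaIoi {a : ℝ} (ha : 0 < a) (ha1 : a < 1) :
    ∫ t in Ioi (0:ℝ), t ^ (a-1) * (1 + t)⁻¹ = Real.Gamma a * Real.Gamma (1-a) := by
  set μ := volume.restrict (Ioi (0:ℝ)) with hμ
  set f : ℝ → ℝ → ℝ := fun v t => t ^ (a-1) * Real.exp (-v) * Real.exp (-(t*v)) with hf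
  have hfmeas : Measurable (Function.uncurry f) := by
    have : Function.uncurry f = fun p : ℝ × ℝ =>
        p.2 ^ (a-1) * Real.exp (-p.1) * Real.exp (-(p.2*p.1)) := rfl
    rw [this]; fun_prop
  -- inner integral in t, for v > 0
  have hinner_t : ∀ v : ℝ, 0 < v →
      ∫ t in Ioi (0:ℝ), f v t = Real.exp (-v) * ((1/v) ^ a * Real.Gamma a) := by
    intro v hv
    have : ∀ t : ℝ, f v t = Real.exp (-v) * (t ^ (a-1) * Real.exp (-(v*t))) := by
      intro t; simp [hf, mul_comm t v]; ring
    simp_rw [this]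
    rw [MeasureTheory.integral_const_mul, Real.integral_rpow_mul_exp_neg_mul_Ioi ha hv]
  -- integrability of f v ∙ for v > 0
  have hint_t : ∀ v : ℝ, 0 < v → Integrable (fun t => f v t) μ := by
    intro v hv
    have h := (aux_integrableOn_rpow_exp ha ha1.le hv).const_mul (Real.exp (-v))
    refine h.congr ?_
    · refine Filter.Eventually.of_forall fun t => ?_
      simp [hf, mul_comm t v]; ring
  -- Integrability on the product
  have hprod : Integrable (Function.uncurry f) (μ.prod μ) := by
    rw [integrable_prod_iff hfmeas.aestronglyMeasurable]
    constructor
    · filter_upwards [ae_restrict_mem measurableSet_Ioi] with v hv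
      exact hint_t v hv
    · have hbase := ((aux_integrableOn_rpow_exp (by linarith : (0:ℝ) < 1 - a) (by linarith)
        one_pos).const_mul (Real.Gamma a))
      refine hbase.congr ?_
      filter_upwards [ae_restrict_mem measurableSet_Ioi] with v hv
      have h1 : ∫ y, ‖Function.uncurry f (v, y)‖ ∂μ = ∫ t in Ioi (0:ℝ), f v t := by
        refine setIntegral_congr_fun measurableSet_Ioi fun t ht => ?_
        have h0 : 0 ≤ f v t := by
          have := Real.rpow_nonneg (le_of_lt ht) (a-1)
          simp only [hf]; positivity
        simp [Real.norm_eq_abs, abs_of_nonneg h0]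
      have hvpow : (1/v) ^ a = v ^ ((1-a) - 1) := by
        rw [one_div, Real.inv_rpow hv.le, ← Real.rpow_neg hv.le]
        congr 1; ring
      rw [h1, hinner_t v hv, hvpow, one_mul]
      ring
  -- swap
  have hswap := MeasureTheory.integral_integral_swap hprod
  -- LHS of swap
  have hLHS : ∫ v, ∫ t, f v t ∂μ ∂μ = Real.Gamma a * Real.Gamma (1-a) := by
    have h1 : ∫ v, ∫ t, f v t ∂μ ∂μ
        = ∫ v in Ioi (0:ℝ), Real.Gamma a * (v ^ ((1-a)-1) * Real.exp (-(1*v))) := by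
      refine setIntegral_congr_fun measurableSet_Ioi fun v hv => ?_
      rw [hinner_t v hv]
      have hvpow : (1/v) ^ a = v ^ ((1-a) - 1) := by
        rw [one_div, Real.inv_rpow (le_of_lt (mem_Ioi.mp hv)), ← Real.rpow_neg (le_of_lt (mem_Ioi.mp hv))]
        congr 1; ring
      rw [hvpow, one_mul]; ring
    rw [h1, MeasureTheory.integral_const_mul, Real.integral_rpow_mul_exp_neg_mul_Ioi (by linarith) one_pos]
    simp [Real.one_rpow]
  -- RHS of swap
  have hRHS : ∫ t, ∫ v, f v t ∂μ ∂μ = ∫ t in Ioi (0:ℝ), t ^ (a-1) * (1 + t)⁻¹ := by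
    refine setIntegral_congr_fun measurableSet_Ioi fun t ht => ?_
    have hstep : ∀ v : ℝ, f v t = t ^ (a-1) * (v ^ ((1:ℝ)-1) * Real.exp (-((1+t)*v))) := by
      intro v
      rw [sub_self, Real.rpow_zero, one_mul]
      show t ^ (a-1) * Real.exp (-v) * Real.exp (-(t*v)) = _
      rw [mul_assoc, ← Real.exp_add]
      congr 2; ring
    simp_rw [hstep]
    rw [MeasureTheory.integral_const_mul, Real.integral_rpow_mul_exp_neg_mul_Ioi one_pos (by have := mem_Ioi.mp ht; linarith : (0:ℝ) < 1 + t)]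
    rw [Real.Gamma_one, Real.rpow_one]
    ring
  rw [← hRHS, ← hswap, hLHS]

lemma aux_M {s : ℝ} (hs : 0 < s) (hs2 : s < 2) :
    ∫ x in Ioi (0:ℝ), x ^ (s-1) * (1 + x^2)⁻¹
      = Real.Gamma (s/2) * Real.Gamma (1 - s/2) / 2 := by
  have h2 : (2:ℝ) ≠ 0 := two_ne_zero
  have key := MeasureTheory.integral_comp_rpow_Ioi
    (fun y : ℝ => y ^ (s/2-1) * (1 + y)⁻¹) h2
  have hcongr : ∫ x in Ioi (0:ℝ), (|(2:ℝ)| * x ^ ((2:ℝ) - 1)) •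
      ((fun y : ℝ => y ^ (s/2-1) * (1 + y)⁻¹) (x ^ (2:ℝ)))
      = ∫ x in Ioi (0:ℝ), 2 * (x ^ (s-1) * (1 + x^2)⁻¹) := by
    refine setIntegral_congr_fun measurableSet_Ioi fun x hx => ?_
    have hx0 : (0:ℝ) < x := hx
    have hp1 : (x ^ (2:ℝ)) ^ (s/2 - 1) = x ^ (s - 2) := by
      rw [← Real.rpow_mul hx0.le]
      congr 1; ring
    have hp2 : x ^ ((2:ℝ) - 1) = x := by
      norm_num
    have hp3 : x ^ (2:ℝ) = x ^ 2 := by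
      rw [show (2:ℝ) = ((2:ℕ):ℝ) by norm_num, Real.rpow_natCast]
    have hp4 : x * x ^ (s-2) = x ^ (s-1) := by
      nth_rewrite 1 [← Real.rpow_one x]
      rw [← Real.rpow_add hx0]
      congr 1; ring
    simp only [smul_eq_mul, hp2, hp3]
    rw [show (x ^ 2) ^ (s/2 - 1) = x ^ (s-2) by rw [← hp3]; exact hp1]
    rw [abs_of_nonneg (by norm_num : (0:ℝ) ≤ 2)]
    rw [mul_assoc, ← mul_assoc x, hp4]
  rw [hcongr] at key
  rw [MeasureTheory.integral_const_mul] at key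
  have hbeta := aux_betaIoi (a := s/2) (by linarith) (by linarith)
  rw [show s/2 - 1 = s/2 - 1 by rfl] at hbeta
  rw [hbeta] at key
  linarith [key]

lemma aux_K {s ω : ℝ} (hs : 0 < s) (hs2 : s < 2) (hω : 0 < ω) :
    ∫ x in Ioi (0:ℝ), x ^ (s-1) * (x^2 + ω^2)⁻¹
      = ω ^ (s-2) * (Real.Gamma (s/2) * Real.Gamma (1 - s/2)) / 2 := by
  have key := MeasureTheory.integral_comp_mul_left_Ioi
    (fun x : ℝ => x ^ (s-1) * (x^2 + ω^2)⁻¹) 0 hω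
  rw [mul_zero] at key
  have hcongr : ∫ x in Ioi (0:ℝ),
      (fun x : ℝ => x ^ (s-1) * (x^2 + ω^2)⁻¹) (ω * x)
      = ∫ x in Ioi (0:ℝ), (ω ^ (s-1) * (ω^2)⁻¹) * (x ^ (s-1) * (1 + x^2)⁻¹) := by
    refine setIntegral_congr_fun measurableSet_Ioi fun x hx => ?_
    have hx0 : (0:ℝ) < x := hx
    simp only
    rw [Real.mul_rpow hω.le hx0.le]
    have hden : ((ω * x)^2 + ω^2)⁻¹ = (ω^2)⁻¹ * (1 + x^2)⁻¹ := by
      rw [← mul_inv]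
      congr 1
      ring
    rw [hden]
    ring
  rw [hcongr, MeasureTheory.integral_const_mul, aux_M hs hs2, smul_eq_mul] at key
  have hI : (∫ x in Ioi (0:ℝ), x ^ (s-1) * (x^2 + ω^2)⁻¹)
      = ω * (ω ^ (s-1) * (ω^2)⁻¹ * (Real.Gamma (s/2) * Real.Gamma (1 - s/2) / 2)) := by
    rw [key, ← mul_assoc, mul_inv_cancel₀ hω.ne', one_mul]
  rw [hI]
  have hpow : ω * (ω ^ (s-1) * (ω^2)⁻¹) = ω ^ (s-2) := by
    have hω2 : (ω:ℝ)^2 = ω ^ (2:ℝ) := by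
      rw [show (2:ℝ) = ((2:ℕ):ℝ) by norm_num, Real.rpow_natCast]
    rw [hω2, ← Real.rpow_neg hω.le]
    nth_rewrite 1 [← Real.rpow_one ω]
    rw [← Real.rpow_add hω, ← Real.rpow_add hω]
    congr 1; ring
  calc ω * (ω ^ (s-1) * (ω^2)⁻¹ * (Real.Gamma (s/2) * Real.Gamma (1 - s/2) / 2))
      = (ω * (ω ^ (s-1) * (ω^2)⁻¹)) * (Real.Gamma (s/2) * Real.Gamma (1 - s/2) / 2) := by ring
    _ = ω ^ (s-2) * (Real.Gamma (s/2) * Real.Gamma (1 - s/2)) / 2 := by rw [hpow]; ring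

-- integrability of the K integrand
lemma aux_K_integrable {s ω : ℝ} (hs : 0 < s) (hs2 : s < 2) (hω : 0 < ω) :
    IntegrableOn (fun x : ℝ => x ^ (s-1) * (x^2 + ω^2)⁻¹) (Ioi 0) := by
  have hm : Measurable (fun x : ℝ => x ^ (s-1) * (x^2 + ω^2)⁻¹) := by fun_prop
  have h1 : IntegrableOn (fun x : ℝ => x ^ (s-1) * (x^2 + ω^2)⁻¹) (Ioc 0 1) := by
    have hbase : IntegrableOn (fun x : ℝ => x ^ (s-1) * (ω^2)⁻¹) (Ioc (0:ℝ) 1) := by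
      refine Integrable.mul_const ?_ _
      simpa [IntegrableOn] using
        ((intervalIntegrable_iff_integrableOn_Ioc_of_le (zero_le_one : (0:ℝ) ≤ 1)).mp
          (intervalIntegral.intervalIntegrable_rpow' (by linarith)))
    refine hbase.mono' hm.aestronglyMeasurable.restrict ?_
    filter_upwards [ae_restrict_mem measurableSet_Ioc] with x hx
    have hx0 : (0:ℝ) < x := hx.1
    have hrp : (0:ℝ) ≤ x ^ (s-1) := Real.rpow_nonneg hx0.le _
    have hle : (x^2 + ω^2)⁻¹ ≤ (ω^2)⁻¹ := by
      apply inv_anti₀ (by positivity) (by nlinarith)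
    rw [Real.norm_eq_abs, abs_mul, abs_of_nonneg hrp, abs_of_nonneg (by positivity)]
    have : (0:ℝ) ≤ (ω^2)⁻¹ := by positivity
    calc x ^ (s-1) * (x^2+ω^2)⁻¹ ≤ x ^ (s-1) * (ω^2)⁻¹ := by nlinarith
      _ ≤ x ^ (s-1) * (ω^2)⁻¹ := le_rfl
  have h2 : IntegrableOn (fun x : ℝ => x ^ (s-1) * (x^2 + ω^2)⁻¹) (Ioi 1) := by
    have hbase : IntegrableOn (fun x : ℝ => x ^ (s-3)) (Ioi (1:ℝ)) :=
      integrableOn_Ioi_rpow_of_lt (by linarith) one_pos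
    refine hbase.mono' hm.aestronglyMeasurable.restrict ?_
    filter_upwards [ae_restrict_mem measurableSet_Ioi] with x hx
    have hx1 : (1:ℝ) < x := hx
    have hx0 : (0:ℝ) < x := by linarith
    have hrp : (0:ℝ) ≤ x ^ (s-1) := Real.rpow_nonneg hx0.le _
    rw [Real.norm_eq_abs, abs_mul, abs_of_nonneg hrp, abs_of_nonneg (by positivity)]
    have hle : (x^2 + ω^2)⁻¹ ≤ (x^2)⁻¹ := by
      apply inv_anti₀ (by positivity) (by nlinarith)
    have hx2 : (x^2:ℝ)⁻¹ = x ^ (-(2:ℝ)) := by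
      rw [show (x:ℝ)^2 = x ^ (((2:ℕ)):ℝ) by rw [Real.rpow_natCast], ← Real.rpow_neg hx0.le]
      norm_num
    calc x ^ (s-1) * (x^2+ω^2)⁻¹ ≤ x ^ (s-1) * (x^2)⁻¹ := by nlinarith
      _ = x ^ (s-3) := by
          rw [hx2, ← Real.rpow_add hx0]; congr 1; ring
  have := h1.union h2
  rwa [Set.Ioc_union_Ioi_eq_Ioi (zero_le_one : (0:ℝ) ≤ 1)] at this

-- the principal power (iω)^(α-1)
lemma aux_cpow {α ω : ℝ} (hω : 0 < ω) :
    (Complex.I * (ω:ℂ)) ^ ((α:ℂ) - 1)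
      = ((ω ^ (α-1) : ℝ) : ℂ) *
        (((Real.sin (π*α/2) : ℝ) : ℂ) - Complex.I * ((Real.cos (π*α/2) : ℝ) : ℂ)) := by
  have hne : Complex.I * (ω:ℂ) ≠ 0 := by
    simp [Complex.I_ne_zero, Complex.ofReal_ne_zero, hω.ne']
  rw [Complex.cpow_def_of_ne_zero hne]
  have hlog : Complex.log (Complex.I * (ω:ℂ)) = (Real.log ω : ℂ) + (π/2 : ℝ) * Complex.I := by
    rw [Complex.log]
    have habs : ‖Complex.I * (ω:ℂ)‖ = ω := by
      rw [norm_mul, Complex.norm_I, Complex.norm_real, one_mul, Real.norm_eq_abs, abs_of_pos hω]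
    have harg : Complex.arg (Complex.I * (ω:ℂ)) = π/2 := by
      rw [Complex.arg_eq_pi_div_two_iff]
      simp [hω]
    rw [habs, harg]
  rw [hlog]
  have hexp : ((Real.log ω : ℂ) + (π/2 : ℝ) * Complex.I) * ((α:ℂ) - 1)
      = (((α-1) * Real.log ω : ℝ) : ℂ) + (((α-1) * (π/2) : ℝ) : ℂ) * Complex.I := by
    push_cast; ring
  rw [hexp, Complex.exp_add, Complex.exp_mul_I]
  have h1 : Complex.exp ((((α-1) * Real.log ω : ℝ)) : ℂ) = ((ω ^ (α-1) : ℝ) : ℂ) := by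
    rw [← Complex.ofReal_exp]
    congr 1
    rw [Real.rpow_def_of_pos hω]
    ring_nf
  rw [h1]
  congr 1
  have hcos : Real.cos ((α-1) * (π/2)) = Real.sin (π*α/2) := by
    rw [show (α-1) * (π/2) = -(π/2 - π*α/2) by ring, Real.cos_neg, Real.cos_pi_div_two_sub]
  have hsin : Real.sin ((α-1) * (π/2)) = -Real.cos (π*α/2) := by
    rw [show (α-1) * (π/2) = -(π/2 - π*α/2) by ring, Real.sin_neg, Real.sin_pi_div_two_sub]
  rw [← Complex.ofReal_cos, ← Complex.ofReal_sin, hcos, hsin]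
  push_cast
  ring

lemma aux_ne {x ω : ℝ} (hω : 0 < ω) : (x:ℂ) + Complex.I*ω ≠ 0 := by
  intro h
  have him := congrArg Complex.im h
  simp at him
  linarith

lemma aux_exp_split (α ω u x : ℝ) :
    Complex.exp (-((x:ℂ) + Complex.I*ω) * u)
      = ((Real.exp (-(u*x)) : ℝ) : ℂ) * Complex.exp (-(Complex.I*(ω:ℂ)*u)) := by
  rw [Complex.ofReal_exp, ← Complex.exp_add]
  congr 1
  push_cast
  ring

lemma aux_fubini {α ω R : ℝ} (h0 : 0 < α) (h1 : α < 1) (hω : 0 < ω) (hR : 0 < R) :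
    ((Real.Gamma α : ℝ) : ℂ) *
      ∫ u in (0:ℝ)..R, ((u ^ (-α) : ℝ) : ℂ) * Complex.exp (-(Complex.I*(ω:ℂ)*u))
    = ∫ x in Ioi (0:ℝ), ((x ^ (α-1) : ℝ) : ℂ) *
        ((1 - Complex.exp (-((x:ℂ) + Complex.I*ω) * R)) / ((x:ℂ) + Complex.I*ω)) := by
  set μu := volume.restrict (Ioc (0:ℝ) R) with hμu
  set νx := volume.restrict (Ioi (0:ℝ)) with hνx
  set f : ℝ → ℝ → ℂ := fun u x =>
    ((x ^ (α-1) : ℝ) : ℂ) * Complex.exp (-((x:ℂ) + Complex.I*ω) * u) with hf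
  have hmeas : AEStronglyMeasurable (Function.uncurry f) (μu.prod νx) := by
    apply Measurable.aestronglyMeasurable
    have : Function.uncurry f = fun p : ℝ × ℝ =>
        ((p.2 ^ (α-1) : ℝ) : ℂ) * Complex.exp (-((p.2:ℂ) + Complex.I*ω) * p.1) := rfl
    rw [this]
    fun_prop
  -- norms
  have hnorm : ∀ u : ℝ, 0 < u → ∀ x : ℝ, 0 < x →
      ‖f u x‖ = x ^ (α-1) * Real.exp (-(u*x)) := by
    intro u hu x hx
    rw [hf]
    simp only
    rw [norm_mul, Complex.norm_real, Real.norm_eq_abs,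
      Complex.norm_exp, abs_of_nonneg (Real.rpow_nonneg hx.le _)]
    congr 1
    simp [mul_comm]
  -- integrability in x, for fixed u > 0
  have hint_x : ∀ u : ℝ, 0 < u → Integrable (fun x => f u x) νx := by
    intro u hu
    have hbase : Integrable (fun x : ℝ =>
        ((x ^ (α-1) * Real.exp (-(u*x)) : ℝ) : ℂ) * Complex.exp (-(Complex.I*(ω:ℂ)*u))) νx :=
      ((aux_integrableOn_rpow_exp h0 h1.le hu).ofReal).mul_const _
    refine hbase.congr (Filter.Eventually.of_forall fun x => ?_)
    rw [hf]
    simp only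
    rw [aux_exp_split α ω u x]
    push_cast
    ring
  -- value of inner integral in x
  have hinner_x : ∀ u : ℝ, 0 < u →
      ∫ x, f u x ∂νx
        = ((Real.Gamma α * u ^ (-α) : ℝ) : ℂ) * Complex.exp (-(Complex.I*(ω:ℂ)*u)) := by
    intro u hu
    have hstep : ∀ x : ℝ, f u x
        = ((x ^ (α-1) * Real.exp (-(u*x)) : ℝ) : ℂ) * Complex.exp (-(Complex.I*(ω:ℂ)*u)) := by
      intro x
      rw [hf]
      simp only
      rw [aux_exp_split α ω u x]
      push_cast
      ring
    simp_rw [hstep]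
    rw [MeasureTheory.integral_mul_const]
    have : ∫ x, ((x ^ (α-1) * Real.exp (-(u*x)) : ℝ) : ℂ) ∂νx
        = ((∫ x, x ^ (α-1) * Real.exp (-(u*x)) ∂νx : ℝ) : ℂ) := integral_ofReal
    rw [this, hνx, Real.integral_rpow_mul_exp_neg_mul_Ioi h0 hu]
    have hupow : (1/u) ^ α = u ^ (-α) := by
      rw [one_div, Real.inv_rpow hu.le, ← Real.rpow_neg hu.le]
    rw [hupow]
    norm_cast
    rw [mul_comm (u ^ (-α)) (Real.Gamma α)]
  -- product integrability
  have hprod : Integrable (Function.uncurry f) (μu.prod νx) := by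
    rw [integrable_prod_iff hmeas]
    constructor
    · filter_upwards [ae_restrict_mem measurableSet_Ioc] with u hu
      exact hint_x u hu.1
    · have hbase : Integrable (fun u : ℝ => Real.Gamma α * u ^ (-α)) μu := by
        rw [hμu]
        refine Integrable.const_mul ?_ _
        simpa [IntegrableOn] using
          ((intervalIntegrable_iff_integrableOn_Ioc_of_le hR.le).mp
            (intervalIntegral.intervalIntegrable_rpow' (by linarith)))
      refine hbase.congr ?_
      filter_upwards [ae_restrict_mem measurableSet_Ioc] with u hu
      have h1 : ∫ x, ‖Function.uncurry f (u, x)‖ ∂νx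
          = ∫ x in Ioi (0:ℝ), x ^ (α-1) * Real.exp (-(u*x)) := by
        rw [hνx]
        refine setIntegral_congr_fun measurableSet_Ioi fun x hx => ?_
        exact hnorm u hu.1 x hx
      rw [h1, Real.integral_rpow_mul_exp_neg_mul_Ioi h0 hu.1]
      have hupow : (1/u) ^ α = u ^ (-α) := by
        rw [one_div, Real.inv_rpow hu.1.le, ← Real.rpow_neg hu.1.le]
      rw [hupow, mul_comm]
  have hswap := MeasureTheory.integral_integral_swap hprod
  -- LHS
  have hL : ∫ u, ∫ x, f u x ∂νx ∂μu
      = ((Real.Gamma α : ℝ) : ℂ) *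
        ∫ u in (0:ℝ)..R, ((u ^ (-α) : ℝ) : ℂ) * Complex.exp (-(Complex.I*(ω:ℂ)*u)) := by
    have h1 : ∫ u, ∫ x, f u x ∂νx ∂μu
        = ∫ u in Ioc (0:ℝ) R, ((Real.Gamma α : ℝ):ℂ) *
            (((u ^ (-α) : ℝ) : ℂ) * Complex.exp (-(Complex.I*(ω:ℂ)*u))) := by
      rw [hμu]
      refine setIntegral_congr_fun measurableSet_Ioc fun u hu => ?_
      rw [hinner_x u hu.1]
      push_cast
      ring
    rw [h1, MeasureTheory.integral_const_mul, intervalIntegral.integral_of_le hR.le]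
  -- RHS
  have hRg : ∫ x, ∫ u, f u x ∂μu ∂νx
      = ∫ x in Ioi (0:ℝ), ((x ^ (α-1) : ℝ) : ℂ) *
          ((1 - Complex.exp (-((x:ℂ) + Complex.I*ω) * R)) / ((x:ℂ) + Complex.I*ω)) := by
    rw [hνx]
    refine setIntegral_congr_fun measurableSet_Ioi fun x hx => ?_
    have hd : (x:ℂ) + Complex.I*ω ≠ 0 := aux_ne hω
    have hc : -((x:ℂ) + Complex.I*ω) ≠ 0 := neg_ne_zero.mpr hd
    have h2 : ∫ u, f u x ∂μu
        = ((x ^ (α-1) : ℝ) : ℂ) * ∫ u in (0:ℝ)..R, Complex.exp (-((x:ℂ) + Complex.I*ω) * u) := by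
      rw [hμu, ← intervalIntegral.integral_of_le hR.le, hf]
      simp only
      rw [intervalIntegral.integral_const_mul]
    rw [h2]
    have h3 : ∫ u in (0:ℝ)..R, Complex.exp (-((x:ℂ) + Complex.I*ω) * u)
        = (Complex.exp (-((x:ℂ) + Complex.I*ω) * R) - 1) / (-((x:ℂ) + Complex.I*ω)) := by
      rw [integral_exp_mul_complex hc]
      norm_num
    rw [h3]
    congr 1
    rw [div_neg, ← neg_div]
    congr 1
    ring
  rw [hL] at hswap
  rw [hswap, hRg]

lemma aux_J {α ω : ℝ} (h0 : 0 < α) (h1 : α < 1) (hω : 0 < ω) :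
    ∫ x in Ioi (0:ℝ), ((x ^ (α-1) : ℝ) : ℂ) * ((x:ℂ) + Complex.I * (ω:ℂ))⁻¹
      = ((Real.Gamma α * Real.Gamma (1-α) : ℝ) : ℂ) * (Complex.I * (ω:ℂ)) ^ ((α:ℂ) - 1) := by
  have hπ := Real.pi_pos
  -- trig positivity
  have hcpos : 0 < Real.cos (π*α/2) := by
    apply Real.cos_pos_of_mem_Ioo
    constructor <;> nlinarith
  have hspos : 0 < Real.sin (π*α/2) := by
    apply Real.sin_pos_of_pos_of_lt_pi <;> nlinarith
  have hsinπα : Real.sin (π*α) = 2 * Real.sin (π*α/2) * Real.cos (π*α/2) := by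
    have h := Real.sin_two_mul (π*α/2)
    rw [show 2*(π*α/2) = π*α by ring] at h
    exact h
  have hsπαpos : 0 < Real.sin (π*α) := by rw [hsinπα]; positivity
  -- Gamma reflection values
  have hG : Real.Gamma α * Real.Gamma (1-α) = π / Real.sin (π*α) :=
    Real.Gamma_mul_Gamma_one_sub α
  -- K values
  have hA := aux_K (s := α+1) (ω := ω) (by linarith) (by linarith) hω
  rw [show α+1-1 = α by ring, show α+1-2 = α-1 by ring] at hA
  have hB := aux_K (s := α) (ω := ω) h0 (by linarith) hω
  -- real identity (i)
  have hGA : Real.Gamma ((α+1)/2) * Real.Gamma (1-(α+1)/2) = π / Real.cos (π*α/2) := by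
    rw [Real.Gamma_mul_Gamma_one_sub ((α+1)/2)]
    rw [show π * ((α+1)/2) = π*α/2 + π/2 by ring, Real.sin_add_pi_div_two]
  have hGB : Real.Gamma (α/2) * Real.Gamma (1-α/2) = π / Real.sin (π*α/2) := by
    rw [Real.Gamma_mul_Gamma_one_sub (α/2)]
    rw [show π * (α/2) = π*α/2 by ring]
  have idA : Real.Gamma ((α+1)/2) * Real.Gamma (1-(α+1)/2) / 2
      = Real.Gamma α * Real.Gamma (1-α) * Real.sin (π*α/2) := by
    rw [hGA, hG, hsinπα]
    field_simp
  have idB : Real.Gamma (α/2) * Real.Gamma (1-α/2) / 2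
      = Real.Gamma α * Real.Gamma (1-α) * Real.cos (π*α/2) := by
    rw [hGB, hG, hsinπα]
    field_simp
  -- the two real integrals
  set f1 : ℝ → ℝ := fun x => x ^ α * (x^2 + ω^2)⁻¹ with hf1
  set f2 : ℝ → ℝ := fun x => ω * (x ^ (α-1) * (x^2 + ω^2)⁻¹) with hf2
  have hIf1 : IntegrableOn f1 (Ioi 0) := by
    have := aux_K_integrable (s := α+1) (ω := ω) (by linarith) (by linarith) hω
    rwa [show α+1-1 = α by ring] at this
  have hIf2 : IntegrableOn f2 (Ioi 0) :=
    (aux_K_integrable (s := α) (ω := ω) h0 (by linarith) hω).const_mul ω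
  -- rewrite the integrand
  have hcongr : ∫ x in Ioi (0:ℝ), ((x ^ (α-1) : ℝ) : ℂ) * ((x:ℂ) + Complex.I * (ω:ℂ))⁻¹
      = ∫ x in Ioi (0:ℝ), (((f1 x : ℝ) : ℂ) - Complex.I * ((f2 x : ℝ) : ℂ)) := by
    refine setIntegral_congr_fun measurableSet_Ioi fun x hx => ?_
    have hx0 : (0:ℝ) < x := hx
    have hne2 : ((x^2 + ω^2 : ℝ) : ℂ) ≠ 0 := by
      rw [Complex.ofReal_ne_zero]
      positivity
    have hmul : ((x:ℂ) + Complex.I * ω) * (((x:ℂ) - Complex.I * ω) * ((x^2+ω^2 : ℝ):ℂ)⁻¹) = 1 := by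
      rw [← mul_assoc]
      have : ((x:ℂ) + Complex.I * ω) * ((x:ℂ) - Complex.I * ω) = ((x^2+ω^2 : ℝ):ℂ) := by
        push_cast
        ring_nf
        rw [Complex.I_sq]
        ring
      rw [this, mul_inv_cancel₀ hne2]
    have hinv : ((x:ℂ) + Complex.I * ω)⁻¹ = ((x:ℂ) - Complex.I * ω) * ((x^2+ω^2 : ℝ):ℂ)⁻¹ :=
      inv_eq_of_mul_eq_one_right hmul
    have hxa : x ^ (α-1) * x = x ^ α := by
      nth_rewrite 2 [← Real.rpow_one x]
      rw [← Real.rpow_add hx0]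
      norm_num
    rw [hinv, hf1, hf2]
    simp only
    rw [← hxa]
    push_cast
    ring
  rw [hcongr]
  have hIf1' : Integrable (fun x => ((f1 x : ℝ) : ℂ)) (volume.restrict (Ioi 0)) := hIf1.ofReal
  have hIf2' : Integrable (fun x => Complex.I * ((f2 x : ℝ) : ℂ)) (volume.restrict (Ioi 0)) :=
    (hIf2.ofReal).const_mul Complex.I
  rw [integral_sub hIf1' hIf2']
  rw [MeasureTheory.integral_const_mul]
  have e1 : ∫ x in Ioi (0:ℝ), ((f1 x : ℝ) : ℂ) = ((∫ x in Ioi (0:ℝ), f1 x : ℝ) : ℂ) :=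
    integral_ofReal
  have e2 : ∫ x in Ioi (0:ℝ), ((f2 x : ℝ) : ℂ) = ((∫ x in Ioi (0:ℝ), f2 x : ℝ) : ℂ) :=
    integral_ofReal
  rw [e1, e2]
  -- values
  have hval1 : ∫ x in Ioi (0:ℝ), f1 x
      = Real.Gamma α * Real.Gamma (1-α) * Real.sin (π*α/2) * ω ^ (α-1) := by
    rw [hf1]
    simp only
    rw [hA, ← idA]
    ring
  have hval2 : ∫ x in Ioi (0:ℝ), f2 x
      = Real.Gamma α * Real.Gamma (1-α) * Real.cos (π*α/2) * ω ^ (α-1) := by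
    rw [hf2]
    simp only
    rw [MeasureTheory.integral_const_mul, hB, ← idB]
    have hωpow : ω * ω ^ (α-2) = ω ^ (α-1) := by
      nth_rewrite 1 [← Real.rpow_one ω]
      rw [← Real.rpow_add hω]
      congr 1; ring
    calc ω * (ω ^ (α-2) * (Real.Gamma (α/2) * Real.Gamma (1-α/2)) / 2)
        = (ω * ω ^ (α-2)) * (Real.Gamma (α/2) * Real.Gamma (1-α/2) / 2) := by ring
      _ = ω ^ (α-1) * (Real.Gamma (α/2) * Real.Gamma (1-α/2) / 2) := by rw [hωpow]
      _ = Real.Gamma (α/2) * Real.Gamma (1-α/2) / 2 * ω ^ (α-1) := by ring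
  rw [hval1, hval2, aux_cpow (α := α) hω]
  push_cast
  ring

lemma aux_dct {α ω : ℝ} (h0 : 0 < α) (h1 : α < 1) (hω : 0 < ω) :
    Tendsto (fun R : ℝ => ∫ x in Ioi (0:ℝ), ((x ^ (α-1) : ℝ) : ℂ) *
        ((1 - Complex.exp (-((x:ℂ) + Complex.I*ω) * R)) / ((x:ℂ) + Complex.I*ω)))
      atTop
      (𝓝 (∫ x in Ioi (0:ℝ), ((x ^ (α-1) : ℝ) : ℂ) * ((x:ℂ) + Complex.I * (ω:ℂ))⁻¹)) := by
  set g : ℝ → ℝ := fun x => 2 * (x ^ (α-1) * (x ⊔ ω)⁻¹) with hg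
  have hgm : Measurable g := by fun_prop
  apply MeasureTheory.tendsto_integral_filter_of_dominated_convergence g
  · refine Filter.Eventually.of_forall fun R => ?_
    apply Measurable.aestronglyMeasurable
    fun_prop
  · filter_upwards [eventually_ge_atTop (0:ℝ)] with R hR
    filter_upwards [ae_restrict_mem measurableSet_Ioi] with x hx
    have hx0 : (0:ℝ) < x := hx
    have habs : ‖(x:ℂ) + Complex.I*ω‖ ≥ x ⊔ ω := by
      apply sup_le
      · calc x = |x| := (abs_of_pos hx0).symm
          _ = |((x:ℂ) + Complex.I*ω).re| := by simp
          _ ≤ ‖(x:ℂ) + Complex.I*ω‖ := Complex.abs_re_le_norm _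
      · calc ω = |ω| := (abs_of_pos hω).symm
          _ = |((x:ℂ) + Complex.I*ω).im| := by simp
          _ ≤ ‖(x:ℂ) + Complex.I*ω‖ := Complex.abs_im_le_norm _
    have hE : ‖1 - Complex.exp (-((x:ℂ) + Complex.I*ω) * R)‖ ≤ 2 := by
      calc ‖1 - Complex.exp (-((x:ℂ) + Complex.I*ω) * R)‖
          ≤ ‖(1:ℂ)‖ + ‖Complex.exp (-((x:ℂ) + Complex.I*ω) * R)‖ := norm_sub_le _ _
        _ = 1 + ‖Complex.exp (-((x:ℂ) + Complex.I*ω) * R)‖ := by rw [norm_one]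
        _ ≤ 1 + 1 := by
            refine add_le_add le_rfl ?_
            rw [Complex.norm_exp]
            apply Real.exp_le_one_iff.mpr
            have : (-((x:ℂ) + Complex.I*ω) * R).re = -(x*R) := by simp
            rw [this]
            nlinarith
        _ = 2 := by norm_num
    have hsup : (0:ℝ) < x ⊔ ω := lt_sup_of_lt_left hx0
    rw [norm_mul, norm_div]
    have hnx : ‖((x ^ (α-1) : ℝ) : ℂ)‖ = x ^ (α-1) := by
      rw [Complex.norm_real, Real.norm_eq_abs]
      exact abs_of_nonneg (Real.rpow_nonneg hx0.le _)
    rw [hnx]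
    simp only [hg]
    have hinv : ‖(x:ℂ) + Complex.I*ω‖⁻¹ ≤ (x ⊔ ω)⁻¹ := by
      apply inv_anti₀ hsup habs
    have h2 : ‖1 - Complex.exp (-((x:ℂ) + Complex.I*ω) * R)‖ / ‖(x:ℂ) + Complex.I*ω‖
        ≤ 2 * (x ⊔ ω)⁻¹ := by
      rw [div_eq_mul_inv]
      apply mul_le_mul hE hinv (by positivity) (by norm_num)
    calc x ^ (α-1) * (‖1 - Complex.exp (-((x:ℂ) + Complex.I*ω) * R)‖ / ‖(x:ℂ) + Complex.I*ω‖)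
        ≤ x ^ (α-1) * (2 * (x ⊔ ω)⁻¹) := by
          apply mul_le_mul_of_nonneg_left h2 (Real.rpow_nonneg hx0.le _)
      _ = 2 * (x ^ (α-1) * (x ⊔ ω)⁻¹) := by ring
  · -- integrability of the bound
    have hA : IntegrableOn g (Ioc 0 ω) := by
      have hbase : IntegrableOn (fun x : ℝ => 2 * ω⁻¹ * x ^ (α-1)) (Ioc (0:ℝ) ω) := by
        refine Integrable.const_mul ?_ _
        simpa [IntegrableOn] using
          ((intervalIntegrable_iff_integrableOn_Ioc_of_le hω.le).mp
            (intervalIntegral.intervalIntegrable_rpow' (by linarith)))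
      refine hbase.mono' hgm.aestronglyMeasurable.restrict ?_
      filter_upwards [ae_restrict_mem measurableSet_Ioc] with x hx
      have hx0 : (0:ℝ) < x := hx.1
      have hsup : (0:ℝ) < x ⊔ ω := lt_sup_of_lt_left hx0
      have h1 : (x ⊔ ω)⁻¹ ≤ ω⁻¹ := inv_anti₀ hω le_sup_right
      have hrp : (0:ℝ) ≤ x ^ (α-1) := Real.rpow_nonneg hx0.le _
      simp only [hg]
      rw [Real.norm_eq_abs, abs_of_nonneg (by positivity)]
      calc 2 * (x ^ (α-1) * (x ⊔ ω)⁻¹) ≤ 2 * (x ^ (α-1) * ω⁻¹) := by nlinarith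
        _ = 2 * ω⁻¹ * x ^ (α-1) := by ring
    have hB : IntegrableOn g (Ioi ω) := by
      have hbase : IntegrableOn (fun x : ℝ => 2 * x ^ (α-2)) (Ioi ω) :=
        (integrableOn_Ioi_rpow_of_lt (by linarith) hω).const_mul 2
      refine hbase.mono' hgm.aestronglyMeasurable.restrict ?_
      filter_upwards [ae_restrict_mem measurableSet_Ioi] with x hx
      have hxω : ω < x := hx
      have hx0 : (0:ℝ) < x := lt_trans hω hxω
      have hs : x ⊔ ω = x := sup_eq_left.mpr hxω.le
      have hxinv : (x:ℝ)⁻¹ = x ^ (-(1:ℝ)) := by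
        rw [← Real.rpow_neg_one]
      simp only [hg]
      rw [Real.norm_eq_abs, abs_of_nonneg (by positivity), hs, hxinv,
        ← Real.rpow_add hx0]
      rw [show α - 1 + -1 = α - 2 by ring]
    have := hA.union hB
    rwa [Set.Ioc_union_Ioi_eq_Ioi hω.le] at this
  · filter_upwards [ae_restrict_mem measurableSet_Ioi] with x hx
    have hx0 : (0:ℝ) < x := hx
    have hexp : Tendsto (fun R : ℝ => Complex.exp (-((x:ℂ) + Complex.I*ω) * R)) atTop (𝓝 0) := by
      rw [tendsto_zero_iff_norm_tendsto_zero]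
      have heq : (fun R : ℝ => ‖Complex.exp (-((x:ℂ) + Complex.I*ω) * R)‖)
          = fun R : ℝ => Real.exp (-(x*R)) := by
        funext R
        rw [Complex.norm_exp]
        congr 1
        simp
      rw [heq]
      apply Real.tendsto_exp_atBot.comp
      have : Tendsto (fun R : ℝ => x * R) atTop atTop :=
        Tendsto.const_mul_atTop hx0 tendsto_id
      exact tendsto_neg_atBot_iff.mpr this
    have : Tendsto (fun R : ℝ => ((x ^ (α-1) : ℝ) : ℂ) *
        ((1 - Complex.exp (-((x:ℂ) + Complex.I*ω) * R)) / ((x:ℂ) + Complex.I*ω)))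
        atTop (𝓝 (((x ^ (α-1) : ℝ) : ℂ) * ((1 - 0) / ((x:ℂ) + Complex.I*ω)))) := by
      apply Tendsto.const_mul
      exact (tendsto_const_nhds.sub hexp).div_const _
    simpa [one_div] using this

lemma aux_core {α ω : ℝ} (h0 : 0 < α) (h1 : α < 1) (hω : 0 < ω) :
    Tendsto (fun R : ℝ =>
        ∫ u in (0:ℝ)..R, ((u ^ (-α) : ℝ) : ℂ) * Complex.exp (-(Complex.I*(ω:ℂ)*u)))
      atTop
      (𝓝 (((Real.Gamma (1-α) : ℝ) : ℂ) * (Complex.I*(ω:ℂ)) ^ ((α:ℂ) - 1))) := by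
  have hΓ : (0:ℝ) < Real.Gamma α := Real.Gamma_pos_of_pos h0
  have hΓne : ((Real.Gamma α : ℝ) : ℂ) ≠ 0 := by
    rw [Complex.ofReal_ne_zero]; exact hΓ.ne'
  have h2 : Tendsto (fun R : ℝ => ((Real.Gamma α : ℝ) : ℂ) *
      ∫ u in (0:ℝ)..R, ((u ^ (-α) : ℝ) : ℂ) * Complex.exp (-(Complex.I*(ω:ℂ)*u)))
      atTop
      (𝓝 (((Real.Gamma α * Real.Gamma (1-α) : ℝ) : ℂ) * (Complex.I * (ω:ℂ)) ^ ((α:ℂ) - 1))) := by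
    rw [← aux_J h0 h1 hω]
    apply Tendsto.congr' ?_ (aux_dct h0 h1 hω)
    filter_upwards [eventually_gt_atTop (0:ℝ)] with R hR
    exact (aux_fubini h0 h1 hω hR).symm
  have h3 := h2.const_mul (((Real.Gamma α : ℝ) : ℂ))⁻¹
  have heq : (fun R : ℝ => (((Real.Gamma α : ℝ) : ℂ))⁻¹ * (((Real.Gamma α : ℝ) : ℂ) *
      ∫ u in (0:ℝ)..R, ((u ^ (-α) : ℝ) : ℂ) * Complex.exp (-(Complex.I*(ω:ℂ)*u))))
      = fun R : ℝ => ∫ u in (0:ℝ)..R, ((u ^ (-α) : ℝ) : ℂ) *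
          Complex.exp (-(Complex.I*(ω:ℂ)*u)) := by
    funext R
    rw [← mul_assoc, inv_mul_cancel₀ hΓne, one_mul]
  rw [heq] at h3
  have hval : (((Real.Gamma α : ℝ) : ℂ))⁻¹ *
      (((Real.Gamma α * Real.Gamma (1-α) : ℝ) : ℂ) * (Complex.I * (ω:ℂ)) ^ ((α:ℂ) - 1))
      = ((Real.Gamma (1-α) : ℝ) : ℂ) * (Complex.I*(ω:ℂ)) ^ ((α:ℂ) - 1) := by
    push_cast
    rw [← mul_assoc, ← mul_assoc, inv_mul_cancel₀ hΓne, one_mul]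
  rwa [hval] at h3

/-- The Liouville–Weyl fractional derivative of order `α ∈ (0,1)` of the
harmonic function `e^{iωt}` equals `(iω)^α e^{iωt}`: the truncated integrals
`(1/Γ(1−α)) ∫_{t−R}^{t} (t−s)^{−α} (iω e^{iωs}) ds` converge to
`(iω)^α e^{iωt}` as `R → ∞`, where `(iω)^α` is the principal complex power. -/
theorem liouvilleWeyl_fracDeriv_exp (α ω t : ℝ) (hα : α ∈ Set.Ioo (0 : ℝ) 1)
    (hω : 0 < ω) :
    Tendsto
      (fun R : ℝ => (1 / (Real.Gamma (1 - α) : ℂ)) *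
          ∫ s in (t - R)..t,
            (((t - s) ^ (-α) : ℝ) : ℂ) *
              (Complex.I * (ω : ℂ) * Complex.exp (Complex.I * (ω : ℂ) * (s : ℂ))))
      atTop
      (𝓝 ((Complex.I * (ω : ℂ)) ^ (α : ℂ) * Complex.exp (Complex.I * (ω : ℂ) * (t : ℂ)))) := by
  obtain ⟨h0, h1⟩ := hα
  have hΓ : (0:ℝ) < Real.Gamma (1-α) := Real.Gamma_pos_of_pos (by linarith)
  have hΓne : ((Real.Gamma (1-α) : ℝ) : ℂ) ≠ 0 := by
    rw [Complex.ofReal_ne_zero]; exact hΓ.ne'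
  set C : ℂ := (1 / (Real.Gamma (1 - α) : ℂ)) *
    (Complex.I * (ω:ℂ) * Complex.exp (Complex.I * (ω:ℂ) * (t:ℂ))) with hC
  have h2 := (aux_core h0 h1 hω).const_mul C
  have hfun : ∀ R : ℝ, C * ∫ u in (0:ℝ)..R, ((u ^ (-α) : ℝ) : ℂ) *
        Complex.exp (-(Complex.I*(ω:ℂ)*u))
      = (1 / (Real.Gamma (1 - α) : ℂ)) *
          ∫ s in (t - R)..t,
            (((t - s) ^ (-α) : ℝ) : ℂ) *
              (Complex.I * (ω : ℂ) * Complex.exp (Complex.I * (ω : ℂ) * (s : ℂ))) := by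
    intro R
    have hsub := intervalIntegral.integral_comp_sub_left
      (fun s : ℝ => (((t - s) ^ (-α) : ℝ) : ℂ) *
        (Complex.I * (ω : ℂ) * Complex.exp (Complex.I * (ω : ℂ) * (s : ℂ)))) t
      (a := 0) (b := R)
    rw [sub_zero] at hsub
    rw [← hsub]
    have hpt : ∀ u : ℝ, (((t - (t - u)) ^ (-α) : ℝ) : ℂ) *
          (Complex.I * (ω : ℂ) * Complex.exp (Complex.I * (ω : ℂ) * ((t - u : ℝ) : ℂ)))
        = (Complex.I * (ω:ℂ) * Complex.exp (Complex.I * (ω:ℂ) * (t:ℂ))) *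
          (((u ^ (-α) : ℝ) : ℂ) * Complex.exp (-(Complex.I*(ω:ℂ)*u))) := by
      intro u
      rw [show t - (t - u) = u by ring]
      have hexp : Complex.exp (Complex.I * (ω : ℂ) * ((t - u : ℝ) : ℂ))
          = Complex.exp (Complex.I * (ω:ℂ) * (t:ℂ)) * Complex.exp (-(Complex.I*(ω:ℂ)*u)) := by
        rw [← Complex.exp_add]
        congr 1
        push_cast
        ring
      rw [hexp]
      ring
    simp_rw [hpt]
    rw [intervalIntegral.integral_const_mul]
    rw [hC]
    ring
  have h3 := h2.congr hfun
  have hval : C * (((Real.Gamma (1-α) : ℝ) : ℂ) * (Complex.I*(ω:ℂ)) ^ ((α:ℂ) - 1))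
      = (Complex.I * (ω : ℂ)) ^ (α : ℂ) * Complex.exp (Complex.I * (ω : ℂ) * (t : ℂ)) := by
    have hne : Complex.I * (ω:ℂ) ≠ 0 := by
      simp [Complex.I_ne_zero, Complex.ofReal_ne_zero, hω.ne']
    have hcp : (Complex.I * (ω:ℂ)) ^ (α:ℂ)
        = (Complex.I * (ω:ℂ)) * (Complex.I * (ω:ℂ)) ^ ((α:ℂ) - 1) := by
      have : (α:ℂ) = 1 + ((α:ℂ) - 1) := by ring
      rw [this, Complex.cpow_add _ _ hne, Complex.cpow_one]
      ring_nf
    rw [hcp, hC]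
    field_simp
  rwa [hval] at h3
end

section
/- Let c_l, E_r ∈ ℝ, ω₀ > 0 with ω₀ ≠ 1, and set α_cr = −(2/π) arctan(π/(2 log ω₀)). Then (π/2) cos(α_cr π/2) + log ω₀ · sin(α_cr π/2) = 0; consequently the sensitivity index S(α) = (π/2) c_l E_r ω₀^{α−1} cos(απ/2) + c_l E_r ω₀^{α−1} sin(απ/2) · log ω₀ vanishes at α = α_cr, and α_cr depends only on ω₀ and not on E_r or c_l. -/
open Real

/-- The critical fractional order `α_cr = −(2/π) arctan(π/(2 log ω₀))` makes
`(π/2) cos(α_cr π/2) + log ω₀ · sin(α_cr π/2) = 0`, hence the sensitivity index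
`S(α) = (π/2) c_l E_r ω₀^{α−1} cos(απ/2) + c_l E_r ω₀^{α−1} sin(απ/2) log ω₀`
vanishes at `α = α_cr`; `α_cr` depends only on `ω₀`, not on `E_r` or `c_l`. -/
theorem critical_alpha_sensitivity_zero (c_l E_r ω₀ : ℝ) (hω₀ : 0 < ω₀) (hω₀' : ω₀ ≠ 1)
    (α_cr : ℝ) (hcr : α_cr = -(2 / π) * Real.arctan (π / (2 * Real.log ω₀))) :
    π / 2 * Real.cos (α_cr * π / 2) + Real.log ω₀ * Real.sin (α_cr * π / 2) = 0 ∧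
    π / 2 * c_l * E_r * ω₀ ^ (α_cr - 1) * Real.cos (α_cr * π / 2)
      + c_l * E_r * ω₀ ^ (α_cr - 1) * Real.sin (α_cr * π / 2) * Real.log ω₀ = 0 := by
  have hπ : (π : ℝ) ≠ 0 := Real.pi_ne_zero
  have hlog : Real.log ω₀ ≠ 0 := Real.log_ne_zero_of_pos_of_ne_one hω₀ hω₀'
  set θ := Real.arctan (π / (2 * Real.log ω₀)) with hθ
  have harg : α_cr * π / 2 = -θ := by
    rw [hcr]; field_simp
  have hcos : Real.cos θ ≠ 0 :=
    ne_of_gt (Real.cos_pos_of_mem_Ioo ⟨neg_pi_div_two_lt_arctan _, arctan_lt_pi_div_two _⟩)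
  have htan : Real.sin θ = π / (2 * Real.log ω₀) * Real.cos θ := by
    have := Real.tan_arctan (π / (2 * Real.log ω₀))
    rw [Real.tan_eq_sin_div_cos] at this
    field_simp at this ⊢
    linarith [this]
  have key : π / 2 * Real.cos (α_cr * π / 2) + Real.log ω₀ * Real.sin (α_cr * π / 2) = 0 := by
    rw [harg, Real.cos_neg, Real.sin_neg, htan]
    field_simp
    ring
  refine ⟨key, ?_⟩
  have : π / 2 * c_l * E_r * ω₀ ^ (α_cr - 1) * Real.cos (α_cr * π / 2)
      + c_l * E_r * ω₀ ^ (α_cr - 1) * Real.sin (α_cr * π / 2) * Real.log ω₀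
      = c_l * E_r * ω₀ ^ (α_cr - 1) *
        (π / 2 * Real.cos (α_cr * π / 2) + Real.log ω₀ * Real.sin (α_cr * π / 2)) := by ring
  rw [this, key, mul_zero]
end
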